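/- arXiv:2308.05208 — 2 statements merged into one kernel-verified Lean document; each statement's English description precedes it below -/
import Mathlib

section
/- Let C = {c_1,…,c_n} ⊆ ℝ be a set of n distinct real numbers. Then Ψ(C) is exactly the set of protrusive orderings of C, and the number of protrusive orderings of C is 2^{n−1}. -/
set_option linter.unreachableTactic false
set_option linter.unusedTactic false

/-- `sumDist V x = Σ_{v ∈ V} |x − v|` (with multiplicity), for `V` a multiset of reals. -/
noncomputable def sumDistR (V : Multiset ℝ) (x : ℝ) : ℝ :=
  (V.map fun v => dist x v).sum

/-- A tuple `(x_1, …, x_n)` of reals is protrusive if for every `i ∈ {1, …, n−1}`,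
the point `x_{i+1}` does not lie in the convex hull of `{x_1, …, x_i}`. -/
def ProtrusiveR {n : ℕ} (σ : Fin n → ℝ) : Prop :=
  ∀ i : ℕ, ∀ h : i + 1 < n,
    σ ⟨i + 1, h⟩ ∉ convexHull ℝ (σ '' {j : Fin n | (j : ℕ) ≤ i})

/-- `Ψ(C) = ∪_{k ≥ 1} Ψ_k(C)` for `C ⊆ ℝ`: the set of orderings of `C` (injective
enumerations `σ : Fin n → ℝ` of `C`) witnessed by some nonempty finite multiset `V`
of vantage points that distinguishes the points of `C`, with `D_V` strictly
increasing along `σ`. -/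
def PsiAllR (n : ℕ) (C : Finset ℝ) : Set (Fin n → ℝ) :=
  {σ | Function.Injective σ ∧ (∀ i, σ i ∈ C) ∧
    ∃ V : Multiset ℝ, 1 ≤ Multiset.card V ∧
      Set.InjOn (sumDistR V) ↑C ∧ StrictMono fun i => sumDistR V (σ i)}

lemma sumDistR_add (V W : Multiset ℝ) (x : ℝ) :
    sumDistR (V + W) x = sumDistR V x + sumDistR W x := by
  simp [sumDistR]

lemma sumDistR_replicate (k : ℕ) (a x : ℝ) :
    sumDistR (Multiset.replicate k a) x = k * dist x a := by
  simp [sumDistR, Multiset.map_replicate, Multiset.sum_replicate, nsmul_eq_mul]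

lemma sumDistR_convex (V : Multiset ℝ) : ConvexOn ℝ Set.univ (sumDistR V) := by
  induction V using Multiset.induction_on with
  | empty =>
      have h0 : sumDistR 0 = fun _ => (0:ℝ) := by funext x; simp [sumDistR]
      rw [h0]; exact convexOn_const (0:ℝ) convex_univ
  | cons a V ih =>
      have : sumDistR (a ::ₘ V) = fun x => dist x a + sumDistR V x := by
        funext x; simp [sumDistR]
      rw [this]
      exact (convexOn_dist a convex_univ).add ih


lemma psi_protrusive {n : ℕ} (σ : Fin n → ℝ) (V : Multiset ℝ)
    (hmono : StrictMono fun i => sumDistR V (σ i)) : ProtrusiveR σ := by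
  intro i h hx
  obtain ⟨y, hy, hle⟩ :=
    (sumDistR_convex V).exists_ge_of_mem_convexHull (Set.subset_univ _) hx
  obtain ⟨j, hj, rfl⟩ := hy
  have hlt : j < (⟨i + 1, h⟩ : Fin n) := by
    simp only [Fin.lt_def]
    exact Nat.lt_succ_of_le hj
  exact absurd (hmono hlt) (not_lt.mpr hle)

lemma exists_good_V {n : ℕ} (σ : Fin n → ℝ) (hp : ProtrusiveR σ) :
    ∀ m : ℕ, m ≤ n → ∃ V : Multiset ℝ, 1 ≤ Multiset.card V ∧
      ∀ j k : Fin n, (j : ℕ) < (k : ℕ) → (k : ℕ) < m →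
        sumDistR V (σ j) < sumDistR V (σ k) := by
  intro m
  induction m with
  | zero => exact fun _ => ⟨{0}, by simp, fun j k _ hk => absurd hk (by omega)⟩
  | succ m ih =>
    intro hm1
    obtain ⟨V, hVcard, hV⟩ := ih (by omega)
    rcases Nat.eq_zero_or_pos m with rfl | hm0
    · exact ⟨V, hVcard, fun j k hjk hk => by omega⟩
    have hmn : m < n := hm1
    set T : Finset ℝ := (Finset.univ.filter fun j : Fin n => (j : ℕ) < m).image σ with hT
    have hne : T.Nonempty := ⟨σ ⟨0, by omega⟩, Finset.mem_image.mpr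
      ⟨⟨0, by omega⟩, Finset.mem_filter.mpr ⟨Finset.mem_univ _, hm0⟩, rfl⟩⟩
    set a := T.min' hne with ha
    set b := T.max' hne with hb
    have hab : a ≤ b := T.min'_le _ (T.max'_mem hne)
    set x := σ ⟨m, hmn⟩ with hx
    have hx_notin : x ∉ Set.Icc a b := by
      intro hxin
      have h1 : m - 1 + 1 < n := by omega
      apply hp (m - 1) h1
      have hseteq : σ '' {j : Fin n | (j : ℕ) ≤ m - 1} = ↑T := by
        ext y
        simp only [Set.mem_image, hT, Finset.coe_image, Finset.coe_filter,
          Finset.mem_univ, true_and, Set.mem_setOf_eq]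
        constructor
        · rintro ⟨j, hj, rfl⟩; exact ⟨j, by omega, rfl⟩
        · rintro ⟨j, hj, rfl⟩; exact ⟨j, by omega, rfl⟩
      rw [show (⟨m - 1 + 1, h1⟩ : Fin n) = ⟨m, hmn⟩ by ext; simp; omega, hseteq]
      have hIcc : Set.Icc a b ⊆ convexHull ℝ (↑T : Set ℝ) := by
        rw [← segment_eq_Icc hab]
        exact (convex_convexHull ℝ _).segment_subset
          (subset_convexHull ℝ _ (T.min'_mem hne))
          (subset_convexHull ℝ _ (T.max'_mem hne))
      exact hIcc hxin
    set e : ℝ := dist x a + dist x b - (b - a) with he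
    have he_pos : 0 < e := by
      simp only [Set.mem_Icc, not_and_or, not_le] at hx_notin
      rcases hx_notin with h | h
      · rw [he, Real.dist_eq, Real.dist_eq, abs_of_nonpos (by linarith),
          abs_of_nonpos (by linarith)]; linarith
      · rw [he, Real.dist_eq, Real.dist_eq, abs_of_nonneg (by linarith),
          abs_of_nonneg (by linarith)]; linarith
    have hconst : ∀ y ∈ Set.Icc a b, dist y a + dist y b = b - a := by
      rintro y ⟨h1, h2⟩
      rw [Real.dist_eq, Real.dist_eq, abs_of_nonneg (by linarith),
        abs_of_nonpos (by linarith)]; ring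
    have hmemIcc : ∀ j : Fin n, (j : ℕ) < m → σ j ∈ Set.Icc a b := by
      intro j hj
      have hjT : σ j ∈ T := Finset.mem_image.mpr
        ⟨j, Finset.mem_filter.mpr ⟨Finset.mem_univ _, hj⟩, rfl⟩
      exact ⟨T.min'_le _ hjT, T.le_max' _ hjT⟩
    set B := (T.image (sumDistR V)).max' (hne.image _) with hB
    obtain ⟨k, hk⟩ := exists_nat_gt ((B - sumDistR V x) / e)
    have hke : B - sumDistR V x < k * e := by
      rw [div_lt_iff₀ he_pos] at hk
      exact hk
    refine ⟨V + Multiset.replicate k a + Multiset.replicate k b, by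
      simp only [Multiset.card_add]; omega, ?_⟩
    intro j j' hjj' hj'
    have hD : ∀ y : ℝ, sumDistR (V + Multiset.replicate k a + Multiset.replicate k b) y
        = sumDistR V y + k * (dist y a + dist y b) := by
      intro y
      rw [sumDistR_add, sumDistR_add, sumDistR_replicate, sumDistR_replicate]
      ring
    rw [hD, hD]
    rcases Nat.lt_or_ge (j' : ℕ) m with hj'm | hj'm
    · have h1 := hconst _ (hmemIcc j (by omega))
      have h2 := hconst _ (hmemIcc j' hj'm)
      rw [h1, h2]
      have := hV j j' hjj' hj'm
      linarith
    · have hj'eq : j' = (⟨m, hmn⟩ : Fin n) := by ext; simp; omega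
      rw [hj'eq]
      have h1 := hconst _ (hmemIcc j (by omega))
      rw [h1]
      have hjB : sumDistR V (σ j) ≤ B :=
        (T.image (sumDistR V)).le_max' _ (Finset.mem_image.mpr
          ⟨σ j, Finset.mem_image.mpr ⟨j, Finset.mem_filter.mpr
            ⟨Finset.mem_univ _, by omega⟩, rfl⟩, rfl⟩)
      have hsum : dist x a + dist x b = (b - a) + e := by rw [he]; ring
      rw [← hx, hsum]
      have hk0 : (0:ℝ) ≤ k := Nat.cast_nonneg k
      nlinarith

lemma psi_eq_prot (n : ℕ) (C : Finset ℝ) (hC : C.card = n) :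
    PsiAllR n C =
      {σ : Fin n → ℝ | Function.Injective σ ∧ (∀ i, σ i ∈ C) ∧ ProtrusiveR σ} := by
  ext σ
  simp only [PsiAllR, Set.mem_setOf_eq]
  constructor
  · rintro ⟨hinj, hmem, V, _, _, hmono⟩
    exact ⟨hinj, hmem, psi_protrusive σ V hmono⟩
  · rintro ⟨hinj, hmem, hp⟩
    refine ⟨hinj, hmem, ?_⟩
    obtain ⟨V, hVcard, hV⟩ := exists_good_V σ hp n le_rfl
    have hmono : StrictMono fun i => sumDistR V (σ i) := by
      intro j k hjk
      exact hV j k hjk k.isLt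
    refine ⟨V, hVcard, ?_, hmono⟩
    -- σ is surjective onto C
    have hsurj : ∀ c ∈ C, ∃ i, σ i = c := by
      have himg : Finset.univ.image σ = C := by
        apply Finset.eq_of_subset_of_card_le
        · intro y hy
          obtain ⟨i, _, rfl⟩ := Finset.mem_image.mp hy
          exact hmem i
        · rw [Finset.card_image_of_injective _ hinj, Finset.card_univ, Fintype.card_fin, hC]
      intro c hc
      rw [← himg] at hc
      obtain ⟨i, _, rfl⟩ := Finset.mem_image.mp hc
      exact ⟨i, rfl⟩
    intro x hx y hy hxy
    obtain ⟨i, rfl⟩ := hsurj x hx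
    obtain ⟨j, rfl⟩ := hsurj y hy
    rcases lt_trichotomy i j with h | h | h
    · exact absurd hxy (ne_of_lt (hmono h))
    · rw [h]
    · exact absurd hxy.symm (ne_of_lt (hmono h))

def ProtSetR (n : ℕ) (C : Finset ℝ) : Set (Fin n → ℝ) :=
  {σ | Function.Injective σ ∧ (∀ i, σ i ∈ C) ∧ ProtrusiveR σ}

lemma protSetR_finite (n : ℕ) (C : Finset ℝ) : (ProtSetR n C).Finite := by
  apply Set.Finite.subset (Set.Finite.pi fun _ : Fin n => C.finite_toSet)
  intro σ hσ
  rw [Set.mem_pi]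
  exact fun i _ => hσ.2.1 i

lemma enum_surj {n : ℕ} {C : Finset ℝ} (hC : C.card = n) {σ : Fin n → ℝ}
    (hinj : Function.Injective σ) (hmem : ∀ i, σ i ∈ C) :
    ∀ c ∈ C, ∃ i, σ i = c := by
  have himg : Finset.univ.image σ = C := by
    apply Finset.eq_of_subset_of_card_le
    · intro y hy
      obtain ⟨i, _, rfl⟩ := Finset.mem_image.mp hy
      exact hmem i
    · rw [Finset.card_image_of_injective _ hinj, Finset.card_univ, Fintype.card_fin, hC]
  intro c hc
  rw [← himg] at hc
  obtain ⟨i, _, rfl⟩ := Finset.mem_image.mp hc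
  exact ⟨i, rfl⟩

lemma last_extreme {m : ℕ} (hm : 1 ≤ m) (C : Finset ℝ) (hC : C.card = m + 1)
    (hne : C.Nonempty) {σ : Fin (m + 1) → ℝ} (hσ : σ ∈ ProtSetR (m + 1) C) :
    σ (Fin.last m) = C.min' hne ∨ σ (Fin.last m) = C.max' hne := by
  obtain ⟨hinj, hmem, hp⟩ := hσ
  by_contra hcon
  push_neg at hcon
  obtain ⟨hL, hM⟩ := hcon
  set L := C.min' hne
  set M := C.max' hne
  have h1 : m - 1 + 1 < m + 1 := by omega
  apply hp (m - 1) h1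
  have hlast : (⟨m - 1 + 1, h1⟩ : Fin (m + 1)) = Fin.last m := by
    ext; simp; omega
  rw [hlast]
  have hmemimg : ∀ c ∈ C, c ≠ σ (Fin.last m) →
      c ∈ σ '' {j : Fin (m + 1) | (j : ℕ) ≤ m - 1} := by
    intro c hc hcne
    obtain ⟨j, rfl⟩ := enum_surj hC hinj hmem c hc
    refine ⟨j, ?_, rfl⟩
    have : j ≠ Fin.last m := fun h => hcne (by rw [h])
    have : (j : ℕ) < m := by
      rcases Fin.lt_or_eq_of_le (Fin.le_last j) with h | h
      · exact h
      · exact absurd h this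
    simp only [Set.mem_setOf_eq]; omega
  have hLmem := hmemimg L (C.min'_mem hne) (Ne.symm hL)
  have hMmem := hmemimg M (C.max'_mem hne) (Ne.symm hM)
  have hIcc : Set.Icc L M ⊆ convexHull ℝ (σ '' {j : Fin (m + 1) | (j : ℕ) ≤ m - 1}) := by
    rw [← segment_eq_Icc (C.min'_le _ (C.max'_mem hne))]
    exact (convex_convexHull ℝ _).segment_subset
      (subset_convexHull ℝ _ hLmem) (subset_convexHull ℝ _ hMmem)
  exact hIcc ⟨C.min'_le _ (hmem _), C.le_max' _ (hmem _)⟩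


lemma image_castSucc_eq {m : ℕ} (σ : Fin (m + 1) → ℝ) (i : ℕ) (hi : i < m) :
    (σ ∘ Fin.castSucc) '' {j : Fin m | (j : ℕ) ≤ i} = σ '' {j : Fin (m + 1) | (j : ℕ) ≤ i} := by
  ext y
  simp only [Set.mem_image, Set.mem_setOf_eq, Function.comp_apply]
  constructor
  · rintro ⟨j, hj, rfl⟩
    exact ⟨j.castSucc, by simpa using hj, rfl⟩
  · rintro ⟨j, hj, rfl⟩
    refine ⟨⟨(j : ℕ), lt_of_le_of_lt hj hi⟩, hj, ?_⟩
    first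
    | rfl
    | (congr 1; ext; simp)

lemma image_snoc_eq {m : ℕ} (τ : Fin m → ℝ) (z : ℝ) (i : ℕ) (hi : i < m) :
    (Fin.snoc τ z : Fin (m + 1) → ℝ) '' {j : Fin (m + 1) | (j : ℕ) ≤ i}
      = τ '' {j : Fin m | (j : ℕ) ≤ i} := by
  ext y
  simp only [Set.mem_image, Set.mem_setOf_eq]
  constructor
  · rintro ⟨j, hj, rfl⟩
    have hjm : (j : ℕ) < m := lt_of_le_of_lt hj hi
    have hj' : j = Fin.castSucc ⟨(j : ℕ), hjm⟩ := by ext; simp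
    rw [hj', Fin.snoc_castSucc]
    exact ⟨_, hj, rfl⟩
  · rintro ⟨j, hj, rfl⟩
    exact ⟨Fin.castSucc j, by simpa using hj, by rw [Fin.snoc_castSucc]⟩

lemma slice_card (m : ℕ) (C : Finset ℝ) (z : ℝ) (hz : z ∈ C)
    (hhull : z ∉ convexHull ℝ (↑(C.erase z) : Set ℝ)) :
    Nat.card {σ : Fin (m + 1) → ℝ // σ ∈ ProtSetR (m + 1) C ∧ σ (Fin.last m) = z}
      = Nat.card (ProtSetR m (C.erase z)) := by
  have hrestrict : ∀ σ : {σ : Fin (m + 1) → ℝ // σ ∈ ProtSetR (m + 1) C ∧ σ (Fin.last m) = z},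
      σ.1 ∘ Fin.castSucc ∈ ProtSetR m (C.erase z) := by
    intro σ
    obtain ⟨⟨hinj, hmem, hp⟩, hlast⟩ := σ.2
    refine ⟨hinj.comp (Fin.castSucc_injective m), ?_, ?_⟩
    · intro j
      refine Finset.mem_erase.mpr ⟨?_, hmem _⟩
      intro hj
      exact Fin.ne_last_of_lt (Fin.castSucc_lt_last j) (hinj (hj.trans hlast.symm))
    · intro i h hin
      apply hp i (by omega)
      have hpt : (σ.1 ∘ Fin.castSucc) (⟨i + 1, h⟩ : Fin m) = σ.1 ⟨i + 1, by omega⟩ := by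
        simp only [Function.comp_apply]
        first
        | rfl
        | (congr 1; ext; simp)
      rw [hpt, image_castSucc_eq σ.1 i (by omega)] at hin
      exact hin
  apply Nat.card_eq_of_bijective (f := fun σ => ⟨σ.1 ∘ Fin.castSucc, hrestrict σ⟩)
  constructor
  · -- injective
    rintro ⟨σ, hσ, hσl⟩ ⟨τ, hτ, hτl⟩ h
    simp only [Subtype.mk.injEq] at h ⊢
    funext j
    refine Fin.lastCases ?_ (fun j' => ?_) j
    · rw [hσl, hτl]
    · exact congrFun h j'
  · -- surjective
    rintro ⟨τ, hinj, hmem, hp⟩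
    refine ⟨⟨Fin.snoc τ z, ⟨⟨?_, ?_, ?_⟩, Fin.snoc_last ..⟩⟩, ?_⟩
    · -- injective
      intro a b
      refine Fin.lastCases ?_ (fun a' => ?_) a <;>
        refine Fin.lastCases ?_ (fun b' => ?_) b <;> intro hab
      · rfl
      · exfalso
        rw [Fin.snoc_last, Fin.snoc_castSucc] at hab
        exact (Finset.mem_erase.mp (hmem b')).1 hab.symm
      · exfalso
        rw [Fin.snoc_castSucc, Fin.snoc_last] at hab
        exact (Finset.mem_erase.mp (hmem a')).1 hab
      · rw [Fin.snoc_castSucc, Fin.snoc_castSucc] at hab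
        rw [hinj hab]
    · -- membership
      intro i
      refine Fin.lastCases ?_ (fun j => ?_) i
      · rw [Fin.snoc_last]
        exact hz
      · rw [Fin.snoc_castSucc]
        exact Finset.mem_of_mem_erase (hmem j)
    · -- protrusive
      intro i h hin
      rcases Nat.lt_or_ge (i + 1) m with him | him
      · apply hp i him
        have hpt : (Fin.snoc τ z : Fin (m + 1) → ℝ) (⟨i + 1, h⟩ : Fin (m + 1))
            = τ ⟨i + 1, him⟩ := by
          have h2 : (⟨i + 1, h⟩ : Fin (m + 1)) = Fin.castSucc ⟨i + 1, him⟩ := by ext; simp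
          rw [h2, Fin.snoc_castSucc]
        rw [hpt, image_snoc_eq τ z i (by omega)] at hin
        exact hin
      · -- i + 1 = m : the new point z is outside the hull of C.erase z
        have him' : i + 1 = m := by omega
        have hm1 : 1 ≤ m := by omega
        apply hhull
        have hpt : (Fin.snoc τ z : Fin (m + 1) → ℝ) (⟨i + 1, h⟩ : Fin (m + 1)) = z := by
          have h2 : (⟨i + 1, h⟩ : Fin (m + 1)) = Fin.last m := by ext; simp; omega
          rw [h2, Fin.snoc_last]
        rw [hpt, image_snoc_eq τ z i (by omega)] at hin
        have hsub : τ '' {j : Fin m | (j : ℕ) ≤ i} ⊆ (↑(C.erase z) : Set ℝ) := by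
          rintro y ⟨j, _, rfl⟩
          exact hmem j
        exact convexHull_mono hsub hin
    · -- restriction of snoc is τ
      simp only [Subtype.mk.injEq]
      apply Subtype.ext
      funext j
      simp [Fin.snoc_castSucc]

lemma count_prot : ∀ (n : ℕ) (C : Finset ℝ), C.card = n →
    Nat.card (ProtSetR n C) = 2 ^ (n - 1) := by
  intro n
  induction n with
  | zero =>
    intro C hC
    have huniv : ProtSetR 0 C = Set.univ := by
      ext σ
      simp only [ProtSetR, Set.mem_setOf_eq, Set.mem_univ, iff_true]
      exact ⟨fun a b _ => a.elim0, fun i => i.elim0, fun i h => absurd h (by omega)⟩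
    rw [huniv]
    simp [Nat.card_congr (Equiv.Set.univ _)]
  | succ m ih =>
    intro C hC
    rcases Nat.eq_zero_or_pos m with rfl | hm
    · -- n = 1
      obtain ⟨c, rfl⟩ := Finset.card_eq_one.mp hC
      have hsingle : ProtSetR 1 {c} = {fun _ => c} := by
        ext σ
        simp only [ProtSetR, Set.mem_setOf_eq, Set.mem_singleton_iff]
        constructor
        · rintro ⟨_, hmem, _⟩
          funext i
          have := hmem i
          rw [Finset.mem_singleton] at this
          rw [this]
        · rintro rfl
          exact ⟨Function.injective_of_subsingleton _,
            fun i => Finset.mem_singleton_self c, fun i h => absurd h (by omega)⟩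
      rw [hsingle]
      simp
    · -- n = m + 1, m ≥ 1
      have hne : C.Nonempty := Finset.card_pos.mp (by omega)
      set L := C.min' hne with hLdef
      set M := C.max' hne with hMdef
      have hLM : L < M := Finset.min'_lt_max'_of_card C (by omega)
      have hMhull : M ∉ convexHull ℝ (↑(C.erase M) : Set ℝ) := by
        intro h
        have hsub : (↑(C.erase M) : Set ℝ) ⊆ Set.Iio M := by
          intro y hy
          rw [Finset.coe_erase] at hy
          exact lt_of_le_of_ne (C.le_max' y hy.1) hy.2
        exact absurd (convexHull_min hsub (convex_Iio M) h) (lt_irrefl M)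
      have hLhull : L ∉ convexHull ℝ (↑(C.erase L) : Set ℝ) := by
        intro h
        have hsub : (↑(C.erase L) : Set ℝ) ⊆ Set.Ioi L := by
          intro y hy
          rw [Finset.coe_erase] at hy
          exact lt_of_le_of_ne (C.min'_le y hy.1) (Ne.symm hy.2)
        exact absurd (convexHull_min hsub (convex_Ioi L) h) (lt_irrefl L)
      set A : Set (Fin (m + 1) → ℝ) :=
        {σ | σ ∈ ProtSetR (m + 1) C ∧ σ (Fin.last m) = M} with hAdef
      set B : Set (Fin (m + 1) → ℝ) :=
        {σ | σ ∈ ProtSetR (m + 1) C ∧ σ (Fin.last m) = L} with hBdef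
      have hunion : ProtSetR (m + 1) C = A ∪ B := by
        ext σ
        constructor
        · intro hσ
          rcases last_extreme hm C hC hne hσ with h | h
          · exact Or.inr ⟨hσ, h⟩
          · exact Or.inl ⟨hσ, h⟩
        · rintro (h | h) <;> exact h.1
      have hdisj : Disjoint A B := by
        rw [Set.disjoint_left]
        rintro σ ⟨_, hM'⟩ ⟨_, hL'⟩
        exact absurd (hL'.symm.trans hM') (ne_of_lt hLM)
      have hAfin : A.Finite := (protSetR_finite (m + 1) C).subset fun σ h => h.1
      have hBfin : B.Finite := (protSetR_finite (m + 1) C).subset fun σ h => h.1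
      have hcardA : Nat.card A = 2 ^ (m - 1) := by
        have h1 : Nat.card A = Nat.card (ProtSetR m (C.erase M)) :=
          slice_card m C M (C.max'_mem hne) hMhull
        rw [h1]
        exact ih (C.erase M) (by rw [Finset.card_erase_of_mem (C.max'_mem hne), hC]; omega)
      have hcardB : Nat.card B = 2 ^ (m - 1) := by
        have h1 : Nat.card B = Nat.card (ProtSetR m (C.erase L)) :=
          slice_card m C L (C.min'_mem hne) hLhull
        rw [h1]
        exact ih (C.erase L) (by rw [Finset.card_erase_of_mem (C.min'_mem hne), hC]; omega)
      have : Nat.card (ProtSetR (m + 1) C)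
          = Nat.card A + Nat.card B := by
        rw [hunion, Nat.card_coe_set_eq, Set.ncard_union_eq hdisj hAfin hBfin,
          ← Nat.card_coe_set_eq, ← Nat.card_coe_set_eq]
      have hpow : 2 ^ (m - 1) + 2 ^ (m - 1) = 2 ^ m := by
        conv_rhs => rw [show m = m - 1 + 1 by omega]
        rw [pow_succ]
        ring
      rw [this, hcardA, hcardB, Nat.add_sub_cancel, hpow]


/-- For a set `C` of `n` distinct reals, `Ψ(C)` is exactly the set of protrusive
orderings of `C`, and the number of protrusive orderings of `C` is `2^{n−1}`. -/
theorem psiAll_eq_protrusive (n : ℕ) (C : Finset ℝ) (hC : C.card = n) :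
    PsiAllR n C =
      {σ : Fin n → ℝ | Function.Injective σ ∧ (∀ i, σ i ∈ C) ∧ ProtrusiveR σ} ∧
    Nat.card {σ : Fin n → ℝ | Function.Injective σ ∧ (∀ i, σ i ∈ C) ∧ ProtrusiveR σ}
      = 2 ^ (n - 1) := by
  exact ⟨psi_eq_prot n C hC, count_prot n C hC⟩
end

section
/- If C ⊆ ℝ^d is a set of n ≤ 4 distinct points (d ≥ 1 arbitrary), then Ψ(C) is exactly the set of protrusive orderings of C. -/
/-- `sumDist V x = Σ_{v ∈ V} ‖x − v‖` (with multiplicity). -/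
noncomputable def sumDist {d : ℕ} (V : Multiset (EuclideanSpace ℝ (Fin d)))
    (x : EuclideanSpace ℝ (Fin d)) : ℝ :=
  (V.map fun v => dist x v).sum

/-- A tuple `(x_1, …, x_n)` in `ℝ^d` is protrusive if for every `i ∈ {1, …, n−1}`,
the point `x_{i+1}` does not lie in the convex hull of `{x_1, …, x_i}`. -/
def Protrusive {d n : ℕ} (σ : Fin n → EuclideanSpace ℝ (Fin d)) : Prop :=
  ∀ i : ℕ, ∀ h : i + 1 < n,
    σ ⟨i + 1, h⟩ ∉ convexHull ℝ (σ '' {j : Fin n | (j : ℕ) ≤ i})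

/-- `Ψ(C) = ∪_{k ≥ 1} Ψ_k(C)`: the set of orderings of `C` (injective enumerations
`σ : Fin n → ℝ^d` of `C`) witnessed by some nonempty finite multiset `V` of vantage
points that distinguishes the points of `C`, with `D_V` strictly increasing along `σ`. -/
def PsiAll {d : ℕ} (n : ℕ) (C : Finset (EuclideanSpace ℝ (Fin d))) :
    Set (Fin n → EuclideanSpace ℝ (Fin d)) :=
  {σ | Function.Injective σ ∧ (∀ i, σ i ∈ C) ∧
    ∃ V : Multiset (EuclideanSpace ℝ (Fin d)), 1 ≤ Multiset.card V ∧
      Set.InjOn (sumDist V) ↑C ∧ StrictMono fun i => sumDist V (σ i)}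


open Filter Topology RealInnerProductSpace

section GeneralAux

variable {F : Type*} [NormedAddCommGroup F] [InnerProductSpace ℝ F]

lemma sm_fin2 {f : Fin 2 → ℝ} (h0 : f 0 < f 1) : StrictMono f := by
  rw [Fin.strictMono_iff_lt_succ]
  intro i; fin_cases i <;> simpa

lemma sm_fin3 {f : Fin 3 → ℝ} (h0 : f 0 < f 1) (h1 : f 1 < f 2) : StrictMono f := by
  rw [Fin.strictMono_iff_lt_succ]
  intro i; fin_cases i <;> simpa

lemma sm_fin4 {f : Fin 4 → ℝ} (h0 : f 0 < f 1) (h1 : f 1 < f 2) (h2 : f 2 < f 3) :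
    StrictMono f := by
  rw [Fin.strictMono_iff_lt_succ]
  intro i; fin_cases i <;> simpa

lemma dist_line (p e : F) (he : ‖e‖ = 1) (t s : ℝ) :
    dist (p + t • e) (p + s • e) = |t - s| := by
  rw [dist_eq_norm]
  have h : (p + t • e) - (p + s • e) = (t - s) • e := by module
  rw [h, norm_smul, he, mul_one, Real.norm_eq_abs]

lemma norm3 {x y : F} (hy : y ≠ 0)
    (hind : ∀ s t : ℝ, s • x + t • y = 0 → s = 0 ∧ t = 0) :
    ‖x‖ < ‖x + y‖ + ‖y‖ := by
  have hxy : ¬ SameRay ℝ (x + y) (-y) := by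
    rintro (h | h | ⟨r₁, r₂, hr₁, hr₂, heq⟩)
    · exact absurd ((hind 1 1 (by rw [one_smul, one_smul, h])).1) one_ne_zero
    · exact hy (neg_eq_zero.1 h)
    · have : r₁ • x + (r₁ + r₂) • y = 0 := by
        have h2 := heq
        rw [smul_add, smul_neg] at h2
        rw [add_smul]
        linear_combination (norm := module) h2
      exact absurd (hind _ _ this).1 (ne_of_gt hr₁)
  have hlt := norm_add_lt_of_not_sameRay hxy
  have hx : x + y + -y = x := by abel
  rw [hx, norm_neg] at hlt
  exact hlt

lemma mem_segment_line (p e : F) {ta tb t : ℝ} (h1 : ta ≤ t) (h2 : t ≤ tb) :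
    p + t • e ∈ segment ℝ (p + ta • e) (p + tb • e) := by
  rcases eq_or_lt_of_le (h1.trans h2) with h | h
  · have ht : t = ta := le_antisymm (h ▸ h2) h1
    subst ht; exact left_mem_segment ℝ _ _
  · have hne : tb - ta ≠ 0 := ne_of_gt (by linarith)
    refine ⟨(tb - t) / (tb - ta), (t - ta) / (tb - ta),
      div_nonneg (by linarith) (by linarith), div_nonneg (by linarith) (by linarith), ?_, ?_⟩
    · rw [← add_div, div_eq_one_iff_eq hne]; ring
    · match_scalars <;> field_simp <;> ring

lemma dual_basis {d1 d2 : F}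
    (hind : ∀ s t : ℝ, s • d1 + t • d2 = 0 → s = 0 ∧ t = 0) (W1 W2 : ℝ) :
    ∃ w : F, ⟪d1, w⟫ = W1 ∧ ⟪d2, w⟫ = W2 := by
  have hd1 : d1 ≠ 0 := by
    intro h; exact one_ne_zero ((hind 1 0 (by simp [h])).1)
  have hd2 : d2 ≠ 0 := by
    intro h; exact one_ne_zero ((hind 0 1 (by simp [h])).2)
  set c1 : ℝ := ⟪d1, d2⟫ / ‖d2‖ ^ 2 with hc1
  set c2 : ℝ := ⟪d2, d1⟫ / ‖d1‖ ^ 2 with hc2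
  set w1 : F := d1 - c1 • d2 with hw1
  set w2 : F := d2 - c2 • d1 with hw2
  have hn2 : (‖d2‖ : ℝ) ^ 2 ≠ 0 := pow_ne_zero 2 (norm_ne_zero_iff.2 hd2)
  have hn1 : (‖d1‖ : ℝ) ^ 2 ≠ 0 := pow_ne_zero 2 (norm_ne_zero_iff.2 hd1)
  have h21 : ⟪d2, w1⟫ = 0 := by
    rw [hw1, inner_sub_right, real_inner_smul_right, hc1, real_inner_comm d1 d2,
      real_inner_self_eq_norm_sq]
    field_simp
    ring
  have h12 : ⟪d1, w2⟫ = 0 := by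
    rw [hw2, inner_sub_right, real_inner_smul_right, hc2, real_inner_comm d2 d1,
      real_inner_self_eq_norm_sq]
    field_simp
    ring
  have hw1ne : w1 ≠ 0 := by
    intro h
    have : (1 : ℝ) • d1 + (-c1) • d2 = 0 := by
      rw [one_smul, neg_smul, ← sub_eq_add_neg, ← hw1, h]
    exact one_ne_zero (hind _ _ this).1
  have hw2ne : w2 ≠ 0 := by
    intro h
    have : (-c2) • d1 + (1 : ℝ) • d2 = 0 := by
      rw [one_smul, neg_smul, add_comm, ← sub_eq_add_neg, ← hw2, h]
    exact one_ne_zero (hind _ _ this).2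
  have h11 : ⟪d1, w1⟫ = ‖w1‖ ^ 2 := by
    have hd : d1 = w1 + c1 • d2 := by rw [hw1]; abel
    nth_rewrite 1 [hd]
    rw [inner_add_left, real_inner_smul_left, real_inner_self_eq_norm_sq, h21]
    ring
  have h22 : ⟪d2, w2⟫ = ‖w2‖ ^ 2 := by
    have hd : d2 = w2 + c2 • d1 := by rw [hw2]; abel
    nth_rewrite 1 [hd]
    rw [inner_add_left, real_inner_smul_left, real_inner_self_eq_norm_sq, h12]
    ring
  have hp1 : (0:ℝ) < ‖w1‖ ^ 2 := pow_pos (norm_pos_iff.2 hw1ne) 2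
  have hp2 : (0:ℝ) < ‖w2‖ ^ 2 := pow_pos (norm_pos_iff.2 hw2ne) 2
  refine ⟨(W1 / ‖w1‖ ^ 2) • w1 + (W2 / ‖w2‖ ^ 2) • w2, ?_, ?_⟩
  · rw [inner_add_right, real_inner_smul_right, real_inner_smul_right, h11, h12]
    field_simp
    ring
  · rw [inner_add_right, real_inner_smul_right, real_inner_smul_right, h21, h22]
    field_simp
    ring

lemma perp_of_not_span {d1 d2 z : F} (hd1 : d1 ≠ 0)
    (h : ¬∃ X Y : ℝ, z = X • d1 + Y • d2) :
    ∃ w0 : F, ⟪d1, w0⟫ = 0 ∧ ⟪d2, w0⟫ = 0 ∧ ⟪z, w0⟫ = ‖w0‖ ^ 2 ∧ w0 ≠ 0 := by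
  have hn1 : (‖d1‖ : ℝ) ^ 2 ≠ 0 := pow_ne_zero 2 (norm_ne_zero_iff.2 hd1)
  by_cases hdep : ∃ τ : ℝ, d2 = τ • d1
  · obtain ⟨τ, hτ⟩ := hdep
    set c : ℝ := ⟪z, d1⟫ / ‖d1‖ ^ 2 with hc
    refine ⟨z - c • d1, ?_, ?_, ?_, ?_⟩
    · rw [inner_sub_right, real_inner_smul_right, hc, real_inner_comm z d1,
        real_inner_self_eq_norm_sq]
      field_simp
      ring
    · rw [hτ, real_inner_smul_left, inner_sub_right, real_inner_smul_right, hc,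
        real_inner_comm z d1, real_inner_self_eq_norm_sq]
      field_simp
      ring
    · nth_rewrite 1 [show z = (z - c • d1) + c • d1 by abel]
      rw [inner_add_left, real_inner_smul_left, real_inner_self_eq_norm_sq]
      have : ⟪d1, z - c • d1⟫ = 0 := by
        rw [inner_sub_right, real_inner_smul_right, hc, real_inner_comm z d1,
          real_inner_self_eq_norm_sq]
        field_simp
        ring
      rw [this]; ring
    · intro h0
      exact h ⟨c, 0, by rw [zero_smul, add_zero, ← sub_eq_zero, h0]⟩
  · -- d1, d2 independent
    set c2 : ℝ := ⟪d2, d1⟫ / ‖d1‖ ^ 2 with hc2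
    set e2 : F := d2 - c2 • d1 with he2
    have he2d1 : ⟪d1, e2⟫ = 0 := by
      rw [he2, inner_sub_right, real_inner_smul_right, hc2, real_inner_comm d2 d1,
        real_inner_self_eq_norm_sq]
      field_simp
      ring
    have he2ne : e2 ≠ 0 := by
      intro h0
      exact hdep ⟨c2, by rw [← sub_eq_zero]; rw [he2] at h0; exact h0⟩
    have hn2 : (‖e2‖ : ℝ) ^ 2 ≠ 0 := pow_ne_zero 2 (norm_ne_zero_iff.2 he2ne)
    set A : ℝ := ⟪z, d1⟫ / ‖d1‖ ^ 2 with hA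
    set B : ℝ := ⟪z, e2⟫ / ‖e2‖ ^ 2 with hB
    set w0 : F := z - A • d1 - B • e2 with hw0
    have h1 : ⟪d1, w0⟫ = 0 := by
      rw [hw0, inner_sub_right, inner_sub_right, real_inner_smul_right,
        real_inner_smul_right, hA, real_inner_comm z d1, real_inner_self_eq_norm_sq, he2d1]
      field_simp
      ring
    have he2d1' : ⟪e2, d1⟫ = 0 := by rw [← real_inner_comm]; exact he2d1
    have he2w0 : ⟪e2, w0⟫ = 0 := by
      rw [hw0, inner_sub_right, inner_sub_right, real_inner_smul_right,
        real_inner_smul_right, hB, real_inner_comm z e2, real_inner_self_eq_norm_sq, he2d1']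
      field_simp
      ring
    have h2 : ⟪d2, w0⟫ = 0 := by
      have hd2 : d2 = e2 + c2 • d1 := by rw [he2]; abel
      rw [hd2, inner_add_left, real_inner_smul_left, he2w0, h1]; ring
    refine ⟨w0, h1, h2, ?_, ?_⟩
    · nth_rewrite 1 [show z = w0 + A • d1 + B • e2 by rw [hw0]; abel]
      rw [inner_add_left, inner_add_left, real_inner_smul_left, real_inner_smul_left,
        real_inner_self_eq_norm_sq, h1, he2w0]
      ring
    · intro h0
      apply h
      refine ⟨A - B * c2, B, ?_⟩
      have hz : z = A • d1 + B • e2 := by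
        rw [hw0] at h0
        linear_combination (norm := module) h0
      rw [hz, he2]
      module

lemma eventually_strictMono {α : Type*} {l : Filter α} {n : ℕ} {Φ : α → Fin n → ℝ}
    {f : Fin n → ℝ} (h : ∀ i, Tendsto (fun x => Φ x i) l (𝓝 (f i))) (hf : StrictMono f) :
    ∀ᶠ x in l, StrictMono (Φ x) := by
  have H : ∀ p : Fin n × Fin n, ∀ᶠ x in l, p.1 < p.2 → Φ x p.1 < Φ x p.2 := by
    rintro ⟨i, j⟩
    by_cases hij : i < j
    · have hs : Tendsto (fun x => Φ x j - Φ x i) l (𝓝 (f j - f i)) := (h j).sub (h i)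
      have hev : ∀ᶠ x in l, 0 < Φ x j - Φ x i :=
        hs.eventually (eventually_gt_nhds (sub_pos.2 (hf hij)))
      exact hev.mono fun x hx _ => by simpa using sub_pos.1 hx
    · exact Eventually.of_forall fun x h' => absurd h' hij
  exact (eventually_all.2 H).mono fun x hx i j hij => hx (i, j) hij

lemma tendsto_dist_far (x u : F) (hu : ‖u‖ = 1) :
    Tendsto (fun R : ℝ => dist x (R • u) - R) atTop (𝓝 (-⟪x, u⟫)) := by
  have hxu : |⟪x, u⟫| ≤ ‖x‖ := by
    have := abs_real_inner_le_norm x u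
    rwa [hu, mul_one] at this
  have hlow : ∀ R : ℝ, -⟪x, u⟫ ≤ dist x (R • u) - R := by
    intro R
    have h1 : ⟪R • u - x, u⟫ ≤ ‖R • u - x‖ := by
      have := real_inner_le_norm (R • u - x) u
      rwa [hu, mul_one] at this
    have h2 : ⟪R • u - x, u⟫ = R - ⟪x, u⟫ := by
      rw [inner_sub_left, real_inner_smul_left, real_inner_self_eq_norm_sq, hu]
      ring
    rw [dist_eq_norm, ← norm_sub_rev]
    linarith [h2 ▸ h1]
  have hupp : ∀ R : ℝ, ‖x‖ + 1 ≤ R →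
      dist x (R • u) - R ≤ -⟪x, u⟫ + (‖x‖ ^ 2 - ⟪x, u⟫ ^ 2) / (2 * (R - ⟪x, u⟫)) := by
    intro R hR
    set D : ℝ := R - ⟪x, u⟫ with hD
    have hD1 : 1 ≤ D := by
      have := abs_le.1 hxu
      simp only [hD]; linarith
    set ρ : ℝ := ‖x‖ ^ 2 - ⟪x, u⟫ ^ 2 with hρ
    have hρ0 : 0 ≤ ρ := by
      have h := sq_le_sq' (abs_le.1 hxu).1 (abs_le.1 hxu).2
      simp only [hρ]; nlinarith [h]
    have hsq : ‖x - R • u‖ ^ 2 = D ^ 2 + ρ := by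
      rw [norm_sub_sq_real, real_inner_smul_right, norm_smul, hu, Real.norm_eq_abs]
      simp only [hD, hρ]
      ring_nf
      nlinarith [sq_abs R]
    have hub : ‖x - R • u‖ ≤ D + ρ / (2 * D) := by
      have hrhs : 0 ≤ D + ρ / (2 * D) := by positivity
      have h2 : ‖x - R • u‖ ^ 2 ≤ (D + ρ / (2 * D)) ^ 2 := by
        rw [hsq]
        have : (D + ρ / (2 * D)) ^ 2 = D ^ 2 + ρ + (ρ / (2 * D)) ^ 2 := by
          field_simp; ring
        nlinarith [sq_nonneg (ρ / (2 * D))]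
      calc ‖x - R • u‖ = √(‖x - R • u‖ ^ 2) := by rw [Real.sqrt_sq (norm_nonneg _)]
      _ ≤ √((D + ρ / (2 * D)) ^ 2) := Real.sqrt_le_sqrt h2
      _ = D + ρ / (2 * D) := Real.sqrt_sq hrhs
    rw [dist_eq_norm]
    simp only [hD] at hub ⊢
    linarith
  apply tendsto_of_tendsto_of_tendsto_of_le_of_le'
    (g := fun _ : ℝ => -⟪x, u⟫)
    (h := fun R : ℝ => -⟪x, u⟫ + (‖x‖ ^ 2 - ⟪x, u⟫ ^ 2) / (2 * (R - ⟪x, u⟫)))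
  · exact tendsto_const_nhds
  · have hden : Tendsto (fun R : ℝ => 2 * (R - ⟪x, u⟫)) atTop atTop := by
      apply Tendsto.const_mul_atTop two_pos
      exact tendsto_atTop_add_const_right _ _ tendsto_id
    have : Tendsto (fun R : ℝ => (‖x‖ ^ 2 - ⟪x, u⟫ ^ 2) / (2 * (R - ⟪x, u⟫))) atTop (𝓝 0) :=
      tendsto_const_nhds.div_atTop hden
    simpa using tendsto_const_nhds.add this
  · exact Eventually.of_forall hlow
  · filter_upwards [eventually_ge_atTop (‖x‖ + 1)] with R hR using hupp R hR

/-- Value of the standard 1-D test function along a line. -/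
lemma lineval (p e : F) (hee : ‖e‖ = 1) (s β t : ℝ) :
    (1 : ℝ) * dist (p + t • e) (p + s • e) + ⟪p + t • e, β • e⟫
      = |t - s| + t * β + β * ⟪p, e⟫ := by
  rw [dist_line p e hee t s]
  simp only [inner_add_left, real_inner_smul_right, real_inner_smul_left,
    real_inner_self_eq_norm_sq, hee, one_pow, one_mul]
  ring

/-- Construction for three points: `q1 ≠ q0`, `q2` not on segment `[q0, q1]`. -/
lemma triple (q0 q1 q2 : F) (h01 : q1 ≠ q0) (hseg : q2 ∉ segment ℝ q0 q1) :
    ∃ (a : ℕ) (v w : F),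
      ((a : ℝ) * dist q0 v + ⟪q0, w⟫ < (a : ℝ) * dist q1 v + ⟪q1, w⟫) ∧
      ((a : ℝ) * dist q1 v + ⟪q1, w⟫ < (a : ℝ) * dist q2 v + ⟪q2, w⟫) ∧
      (1 ≤ a ∨ w ≠ 0) := by
  set d1 : F := q1 - q0 with hd1def
  have hd1 : d1 ≠ 0 := sub_ne_zero.2 h01
  by_cases hsp : ∃ τ : ℝ, q2 - q0 = τ • d1
  · obtain ⟨τ, hτ⟩ := hsp
    have hq2 : q2 = q0 + τ • d1 := by rw [← hτ]; abel
    have hτ' : τ < 0 ∨ 1 < τ := by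
      by_contra hcon
      push_neg at hcon
      obtain ⟨hτ0, hτ1⟩ := hcon
      apply hseg
      refine ⟨1 - τ, τ, by linarith, hτ0, by ring, ?_⟩
      rw [hq2, hd1def]; module
    rcases hτ' with hτn | hτp
    · -- q2 beyond q0, 1-D construction with a kink
      set N : ℝ := ‖d1‖ with hN
      have hN0 : 0 < N := norm_pos_iff.2 hd1
      set e : F := N⁻¹ • d1 with he
      have hee : ‖e‖ = 1 := by
        rw [he, norm_smul, Real.norm_eq_abs, abs_inv, abs_of_pos hN0, ← hN]
        field_simp
      have hd1e : d1 = N • e := by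
        rw [he, smul_smul, mul_inv_cancel₀ (ne_of_gt hN0), one_smul]
      set t3 : ℝ := τ * N with ht3
      have ht30 : t3 < 0 := mul_neg_of_neg_of_pos hτn hN0
      set s : ℝ := t3 / 2 with hs
      set δ : ℝ := -t3 / 2 with hδ
      have hδ0 : 0 < δ := by rw [hδ]; linarith
      have hNt3 : 0 < N - t3 := by linarith
      set ε : ℝ := δ / (N - t3) with hε
      have hε0 : 0 < ε := div_pos hδ0 hNt3
      set β : ℝ := ε - 1 with hβ
      have hεN : ε * (N - t3) = δ := by rw [hε]; field_simp
      have e1 : q1 = q0 + N • e := by rw [← hd1e, hd1def]; abel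
      have e2 : q2 = q0 + t3 • e := by rw [hq2, hd1e, smul_smul, ht3]
      have g0 : (1 : ℝ) * dist q0 (q0 + s • e) + ⟪q0, β • e⟫
          = |0 - s| + 0 * β + β * ⟪q0, e⟫ := by
        have := lineval q0 e hee s β 0
        simpa using this
      have g1 : (1 : ℝ) * dist q1 (q0 + s • e) + ⟪q1, β • e⟫
          = |N - s| + N * β + β * ⟪q0, e⟫ := by
        have := lineval q0 e hee s β N
        rwa [← e1] at this
      have g2 : (1 : ℝ) * dist q2 (q0 + s • e) + ⟪q2, β • e⟫
          = |t3 - s| + t3 * β + β * ⟪q0, e⟫ := by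
        have := lineval q0 e hee s β t3
        rwa [← e2] at this
      have ha1 : |(0:ℝ) - s| = δ := by
        rw [hs, hδ, abs_of_nonneg (by linarith)]; ring
      have ha2 : |N - s| = N - s := abs_of_nonneg (by rw [hs]; linarith)
      have ha3 : |t3 - s| = δ := by
        rw [hs, hδ, abs_of_nonpos (by linarith)]; ring
      refine ⟨1, q0 + s • e, β • e, ?_, ?_, Or.inl le_rfl⟩
      · push_cast
        rw [g0, g1, ha1, ha2]
        have hne : N - t3 ≠ 0 := ne_of_gt hNt3
        have key1 : (N - s) + N * β - (δ + 0 * β) = ε * N := by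
          rw [hβ, hs, hδ, hε]
          field_simp
          ring
        have hp : 0 < ε * N := mul_pos hε0 hN0
        linarith
      · push_cast
        rw [g1, g2, ha2, ha3]
        have hne : N - t3 ≠ 0 := ne_of_gt hNt3
        have key2 : (δ + t3 * β) - ((N - s) + N * β) = δ := by
          rw [hβ, hs, hδ, hε]
          field_simp
          ring
        linarith
    · -- q2 beyond q1: linear functional
      refine ⟨0, 0, d1, ?_, ?_, Or.inr hd1⟩
      · simp only [Nat.cast_zero, zero_mul, zero_add]
        have h : ⟪q1, d1⟫ - ⟪q0, d1⟫ = ‖d1‖ ^ 2 := by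
          rw [← inner_sub_left, ← hd1def, real_inner_self_eq_norm_sq]
        nlinarith [pow_pos (norm_pos_iff.2 hd1) 2]
      · simp only [Nat.cast_zero, zero_mul, zero_add]
        have hq21 : q2 - q1 = (τ - 1) • d1 := by
          have h : q2 - q1 = (q2 - q0) - d1 := by rw [hd1def]; abel
          rw [h, hτ, sub_smul, one_smul]
        have h : ⟪q2, d1⟫ - ⟪q1, d1⟫ = (τ - 1) * ‖d1‖ ^ 2 := by
          rw [← inner_sub_left, hq21, real_inner_smul_left, real_inner_self_eq_norm_sq]
        nlinarith [pow_pos (norm_pos_iff.2 hd1) 2]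
  · -- q2 - q0 not a multiple of d1
    set z : F := q2 - q0 with hz
    have hn1 : (‖d1‖ : ℝ) ^ 2 ≠ 0 := pow_ne_zero 2 (norm_ne_zero_iff.2 hd1)
    set c : ℝ := ⟪z, d1⟫ / ‖d1‖ ^ 2 with hc
    set w0 : F := z - c • d1 with hw0
    have hperp : ⟪d1, w0⟫ = 0 := by
      rw [hw0, inner_sub_right, real_inner_smul_right, hc, real_inner_comm z d1,
        real_inner_self_eq_norm_sq]
      field_simp
      ring
    have hzw0 : ⟪z, w0⟫ = ‖w0‖ ^ 2 := by
      nth_rewrite 1 [show z = w0 + c • d1 by rw [hw0]; abel]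
      rw [inner_add_left, real_inner_smul_left, real_inner_self_eq_norm_sq, hperp]
      ring
    have hw0ne : w0 ≠ 0 := by
      intro h0
      exact hsp ⟨c, by rwa [hw0, sub_eq_zero] at h0⟩
    have hP : (0:ℝ) < ‖w0‖ ^ 2 := pow_pos (norm_pos_iff.2 hw0ne) 2
    set A : ℝ := (dist q1 q0 + 1) / ‖w0‖ ^ 2 with hA
    refine ⟨1, q0, A • w0, ?_, ?_, Or.inl le_rfl⟩
    · have h1 : ⟪q1, A • w0⟫ - ⟪q0, A • w0⟫ = A * ⟪d1, w0⟫ := by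
        rw [← inner_sub_left, ← hd1def, real_inner_smul_right, real_inner_comm]
      rw [hperp, mul_zero] at h1
      have h0 : dist q0 q0 = 0 := dist_self q0
      have hd10 : 0 < dist q1 q0 := dist_pos.2 h01
      push_cast
      nlinarith
    · have h2 : ⟪q2, A • w0⟫ - ⟪q1, A • w0⟫ = A * ‖w0‖ ^ 2 := by
        rw [← inner_sub_left]
        have h : q2 - q1 = z - d1 := by rw [hz, hd1def]; abel
        rw [h, real_inner_smul_right, inner_sub_left, hzw0, hperp]
        ring
      have hAval : A * ‖w0‖ ^ 2 = dist q1 q0 + 1 := by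
        rw [hA]; field_simp
      have htri : 0 ≤ dist q2 q0 := dist_nonneg
      push_cast
      nlinarith

/-- 1-D construction: kinked convex functions `g t = a|t-s| + β t` realizing
a protrusive order on the line. Positions are `0, t2, t3, t4`. -/
lemma oneD (t2 t3 t4 : ℝ) (h2 : 0 < t2) (h3 : t3 < 0 ∨ t2 < t3)
    (h4l : t3 < 0 → (t4 < t3 ∨ t2 < t4)) (h4r : t2 < t3 → (t4 < 0 ∨ t3 < t4)) :
    ∃ (a : ℕ) (s β : ℝ),
      ((a : ℝ) * |0 - s| + 0 * β < (a : ℝ) * |t2 - s| + t2 * β) ∧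
      ((a : ℝ) * |t2 - s| + t2 * β < (a : ℝ) * |t3 - s| + t3 * β) ∧
      ((a : ℝ) * |t3 - s| + t3 * β < (a : ℝ) * |t4 - s| + t4 * β) := by
  rcases h3 with h3l | h3r
  · rcases h4l h3l with h4a | h4b
    · -- c4 : t4 < t3 < 0 < t2
      obtain ⟨δ, hδ⟩ : ∃ x : ℝ, x = -t3 / 2 := ⟨_, rfl⟩
      obtain ⟨s, hs⟩ : ∃ x : ℝ, x = t3 / 2 := ⟨_, rfl⟩
      have hδ0 : 0 < δ := by rw [hδ]; linarith
      have ht23 : 0 < t2 - t3 := by linarith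
      obtain ⟨ε, hε⟩ : ∃ x : ℝ, x = δ / (t2 - t3) := ⟨_, rfl⟩
      have hε0 : 0 < ε := hε ▸ div_pos hδ0 ht23
      have hε1 : ε < 1 := by
        rw [hε, div_lt_one ht23, hδ]; linarith
      obtain ⟨β, hβ⟩ : ∃ x : ℝ, x = ε - 1 := ⟨_, rfl⟩
      have hεeq : ε * (t2 - t3) = δ := by rw [hε]; field_simp
      have a0 : |(0:ℝ) - s| = δ := by rw [hs, hδ, abs_of_nonneg (by linarith)]; ring
      have a2 : |t2 - s| = t2 - s := abs_of_nonneg (by rw [hs]; linarith)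
      have a3 : |t3 - s| = δ := by rw [hs, hδ, abs_of_nonpos (by linarith)]; ring
      have a4 : |t4 - s| = s - t4 := by rw [abs_of_nonpos (by rw [hs]; linarith)]; ring
      refine ⟨1, s, β, ?_, ?_, ?_⟩
      · rw [a0, a2]
        push_cast
        have key : ((1:ℝ) * (t2 - s) + t2 * β) - ((1:ℝ) * δ + 0 * β) = t2 * ε := by
          rw [hβ, hs, hδ]; ring
        nlinarith [mul_pos h2 hε0]
      · rw [a2, a3]
        push_cast
        have key : ((1:ℝ) * δ + t3 * β) - ((1:ℝ) * (t2 - s) + t2 * β)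
            = 2 * δ - ε * (t2 - t3) := by
          rw [hβ, hs, hδ]; ring
        rw [hεeq] at key
        linarith
      · rw [a3, a4]
        push_cast
        have key : ((1:ℝ) * (s - t4) + t4 * β) - ((1:ℝ) * δ + t3 * β)
            = (t3 - t4) * (2 - ε) := by
          rw [hβ, hs, hδ]; ring
        nlinarith [mul_pos (show (0:ℝ) < t3 - t4 by linarith) (show (0:ℝ) < 2 - ε by linarith)]
    · -- c3 : t3 < 0 < t2 < t4
      obtain ⟨K1, hK1⟩ : ∃ K1 : ℝ, K1 = t2 - t3 := ⟨_, rfl⟩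
      obtain ⟨K2, hK2⟩ : ∃ K2 : ℝ, K2 = t4 - t3 := ⟨_, rfl⟩
      have hK10 : 0 < K1 := by rw [hK1]; linarith
      have hK21 : K1 < K2 := by rw [hK1, hK2]; linarith
      have hKs : 0 < K1 + K2 := by linarith
      obtain ⟨ε, hε⟩ : ∃ ε : ℝ, ε = min (2 * (-t3) / (K1 + K2)) 1 := ⟨_, rfl⟩
      have hε0 : 0 < ε := hε ▸ lt_min (div_pos (by linarith) hKs) one_pos
      obtain ⟨δ, hδ⟩ : ∃ δ : ℝ, δ = ε * (K1 + K2) / 4 := ⟨_, rfl⟩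
      have hδ0 : 0 < δ := by rw [hδ]; positivity
      obtain ⟨s, hs⟩ : ∃ s : ℝ, s = t3 + δ := ⟨_, rfl⟩
      have hδle : δ ≤ -t3 / 2 := by
        have h1 : ε ≤ 2 * (-t3) / (K1 + K2) := hε ▸ min_le_left _ _
        have h2' : ε * (K1 + K2) ≤ 2 * (-t3) := (le_div_iff₀ hKs).1 h1
        rw [hδ]; linarith
      have hs0 : s ≤ 0 := by rw [hs]; linarith
      obtain ⟨β, hβ⟩ : ∃ β : ℝ, β = ε - 1 := ⟨_, rfl⟩
      have a0 : |(0:ℝ) - s| = -s := by rw [abs_of_nonneg (by linarith)]; ring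
      have a2 : |t2 - s| = t2 - s := abs_of_nonneg (by linarith)
      have a3 : |t3 - s| = δ := by rw [hs, abs_of_nonpos (by linarith)]; ring
      have a4 : |t4 - s| = t4 - s := abs_of_nonneg (by linarith)
      refine ⟨1, s, β, ?_, ?_, ?_⟩
      · rw [a0, a2]
        push_cast
        have key : ((1:ℝ) * (t2 - s) + t2 * β) - ((1:ℝ) * (-s) + 0 * β) = t2 * ε := by
          rw [hβ]; ring
        nlinarith [mul_pos h2 hε0]
      · rw [a2, a3]
        push_cast
        have key : ((1:ℝ) * δ + t3 * β) - ((1:ℝ) * (t2 - s) + t2 * β)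
            = ε * (K2 - K1) / 2 := by
          rw [hβ, hs, hδ, hK1, hK2]; ring
        nlinarith [mul_pos hε0 (show (0:ℝ) < K2 - K1 by linarith)]
      · rw [a3, a4]
        push_cast
        have key : ((1:ℝ) * (t4 - s) + t4 * β) - ((1:ℝ) * δ + t3 * β)
            = ε * (K2 - K1) / 2 := by
          rw [hβ, hs, hδ, hK1, hK2]; ring
        nlinarith [mul_pos hε0 (show (0:ℝ) < K2 - K1 by linarith)]
  · rcases h4r h3r with h4a | h4b
    · -- c2 : t4 < 0 < t2 < t3
      obtain ⟨δ, hδ⟩ : ∃ x : ℝ, x = -t4 / 2 := ⟨_, rfl⟩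
      obtain ⟨s, hs⟩ : ∃ x : ℝ, x = t4 / 2 := ⟨_, rfl⟩
      have hδ0 : 0 < δ := by rw [hδ]; linarith
      have ht34 : 0 < t3 - t4 := by linarith
      obtain ⟨ε, hε⟩ : ∃ x : ℝ, x = δ / (t3 - t4) := ⟨_, rfl⟩
      have hε0 : 0 < ε := hε ▸ div_pos hδ0 ht34
      obtain ⟨β, hβ⟩ : ∃ x : ℝ, x = ε - 1 := ⟨_, rfl⟩
      have hεeq : ε * (t3 - t4) = δ := by rw [hε]; field_simp
      have a0 : |(0:ℝ) - s| = δ := by rw [hs, hδ, abs_of_nonneg (by linarith)]; ring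
      have a2 : |t2 - s| = t2 - s := abs_of_nonneg (by rw [hs]; linarith)
      have a3 : |t3 - s| = t3 - s := abs_of_nonneg (by rw [hs]; linarith)
      have a4 : |t4 - s| = δ := by rw [hs, hδ, abs_of_nonpos (by linarith)]; ring
      refine ⟨1, s, β, ?_, ?_, ?_⟩
      · rw [a0, a2]
        push_cast
        have key : ((1:ℝ) * (t2 - s) + t2 * β) - ((1:ℝ) * δ + 0 * β) = t2 * ε := by
          rw [hβ, hs, hδ]; ring
        nlinarith [mul_pos h2 hε0]
      · rw [a2, a3]
        push_cast
        have key : ((1:ℝ) * (t3 - s) + t3 * β) - ((1:ℝ) * (t2 - s) + t2 * β)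
            = (t3 - t2) * ε := by
          rw [hβ]; ring
        nlinarith [mul_pos (show (0:ℝ) < t3 - t2 by linarith) hε0]
      · rw [a3, a4]
        push_cast
        have key : ((1:ℝ) * δ + t4 * β) - ((1:ℝ) * (t3 - s) + t3 * β)
            = 2 * δ - ε * (t3 - t4) := by
          rw [hβ, hs, hδ]; ring
        rw [hεeq] at key
        linarith
    · -- c1 : 0 < t2 < t3 < t4, linear
      refine ⟨0, 0, 1, ?_, ?_, ?_⟩ <;> simp <;> linarith

lemma lineval' (p e : F) (hee : ‖e‖ = 1) (a s β t : ℝ) :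
    a * dist (p + t • e) (p + s • e) + ⟪p + t • e, β • e⟫
      = a * |t - s| + t * β + β * ⟪p, e⟫ := by
  rw [dist_line p e hee t s]
  simp only [inner_add_left, real_inner_smul_right, real_inner_smul_left,
    real_inner_self_eq_norm_sq, hee, one_pow, one_mul]
  ring

lemma cond_of_strictMono {n : ℕ} (hn : 1 < n) (q : Fin n → F) (a : ℕ) (v w : F)
    (hmono : StrictMono fun i => (a : ℝ) * dist (q i) v + ⟪q i, w⟫) :
    1 ≤ a ∨ w ≠ 0 := by
  rcases Nat.eq_zero_or_pos a with ha | ha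
  · right
    intro h0
    have h01 := hmono (show (⟨0, by omega⟩ : Fin n) < ⟨1, hn⟩ by simp [Fin.lt_def])
    rw [ha, h0] at h01
    simp at h01
  · left; exact ha

lemma hard_w (α βc s1 s2 s3 : ℝ) (hsum : 0 < α + βc + 1) (hψ : 0 < α * s1 + βc * s2 + s3) :
    ∃ t0 W1 W2 : ℝ, 0 < t0 ∧ s1 + W1 = t0 ∧ s2 + W2 = t0 ∧
      s3 + (-α * W1 - βc * W2) = t0 := by
  have hne : α + βc + 1 ≠ 0 := ne_of_gt hsum
  refine ⟨(α * s1 + βc * s2 + s3) / (α + βc + 1),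
    -s1 + (α * s1 + βc * s2 + s3) / (α + βc + 1),
    -s2 + (α * s1 + βc * s2 + s3) / (α + βc + 1),
    div_pos hψ hsum, by ring, by ring, ?_⟩
  field_simp
  ring

/-- Full construction for four points. -/
lemma construct4 (q : Fin 4 → F) (hinj : Function.Injective q)
    (hseg : q 2 ∉ segment ℝ (q 0) (q 1))
    (hhull : q 3 ∉ convexHull ℝ ({q 0, q 1, q 2} : Set F)) :
    ∃ (a : ℕ) (v w : F), (1 ≤ a ∨ w ≠ 0) ∧
      StrictMono fun i => (a : ℝ) * dist (q i) v + ⟪q i, w⟫ := by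
  have h10 : q 1 ≠ q 0 := hinj.ne (by decide)
  have hd1 : q 1 - q 0 ≠ 0 := sub_ne_zero.2 h10
  have hd2 : q 2 - q 1 ≠ 0 := sub_ne_zero.2 (hinj.ne (by decide))
  have hd02 : q 2 - q 0 ≠ 0 := sub_ne_zero.2 (hinj.ne (by decide))
  by_cases hplane : ∃ X Y : ℝ, q 3 - q 0 = X • (q 1 - q 0) + Y • (q 2 - q 1)
  · obtain ⟨X, Y, hXY⟩ := hplane
    by_cases hdep : ∃ τ : ℝ, q 2 - q 1 = τ • (q 1 - q 0)
    · -- all four points collinear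
      obtain ⟨τ, hτ⟩ := hdep
      obtain ⟨N, hN⟩ : ∃ x : ℝ, x = ‖q 1 - q 0‖ := ⟨_, rfl⟩
      have hN0 : 0 < N := hN ▸ norm_pos_iff.2 hd1
      obtain ⟨e, he⟩ : ∃ x : F, x = N⁻¹ • (q 1 - q 0) := ⟨_, rfl⟩
      have hee : ‖e‖ = 1 := by
        rw [he, norm_smul, Real.norm_eq_abs, abs_inv, abs_of_pos hN0, ← hN]
        field_simp
      have hd1e : q 1 - q 0 = N • e := by
        rw [he, smul_smul, mul_inv_cancel₀ (ne_of_gt hN0), one_smul]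
      obtain ⟨t3, ht3⟩ : ∃ x : ℝ, x = (1 + τ) * N := ⟨_, rfl⟩
      obtain ⟨t4, ht4⟩ : ∃ x : ℝ, x = (X + Y * τ) * N := ⟨_, rfl⟩
      have e1 : q 1 = q 0 + N • e := by rw [← hd1e]; abel
      have e2 : q 2 = q 0 + t3 • e := by
        have h : q 2 - q 0 = (1 + τ) • (q 1 - q 0) := by
          linear_combination (norm := module) hτ
        have h2 : q 2 - q 0 = t3 • e := by rw [h, hd1e, smul_smul, ← ht3]
        linear_combination (norm := module) h2
      have e3 : q 3 = q 0 + t4 • e := by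
        have h : q 3 - q 0 = (X + Y * τ) • (q 1 - q 0) := by
          rw [hXY, hτ]; module
        have h2 : q 3 - q 0 = t4 • e := by rw [h, hd1e, smul_smul, ← ht4]
        linear_combination (norm := module) h2
      -- protrusiveness in coordinates
      have h3 : t3 < 0 ∨ N < t3 := by
        by_contra hcon
        push_neg at hcon
        apply hseg
        have hm := mem_segment_line (q 0) e (ta := 0) (tb := N) hcon.1 hcon.2
        rw [show q 0 + (0:ℝ) • e = q 0 by simp, ← e1, ← e2] at hm
        exact hm
      have h4l : t3 < 0 → (t4 < t3 ∨ N < t4) := by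
        intro h3l
        by_contra hcon
        push_neg at hcon
        apply hhull
        have hm := mem_segment_line (q 0) e (ta := t3) (tb := N) hcon.1 hcon.2
        rw [← e1, ← e2, ← e3] at hm
        exact segment_subset_convexHull (by simp : q 2 ∈ ({q 0, q 1, q 2} : Set F))
          (by simp : q 1 ∈ ({q 0, q 1, q 2} : Set F)) hm
      have h4r : N < t3 → (t4 < 0 ∨ t3 < t4) := by
        intro h3r
        by_contra hcon
        push_neg at hcon
        apply hhull
        have hm := mem_segment_line (q 0) e (ta := 0) (tb := t3) hcon.1 hcon.2
        rw [show q 0 + (0:ℝ) • e = q 0 by simp, ← e2, ← e3] at hm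
        exact segment_subset_convexHull (by simp : q 0 ∈ ({q 0, q 1, q 2} : Set F))
          (by simp : q 2 ∈ ({q 0, q 1, q 2} : Set F)) hm
      obtain ⟨a, s, β, o1, o2, o3⟩ := oneD N t3 t4 hN0 h3 h4l h4r
      have g0 := lineval' (q 0) e hee (a : ℝ) s β 0
      rw [show q 0 + (0:ℝ) • e = q 0 by simp] at g0
      have g1 := lineval' (q 0) e hee (a : ℝ) s β N
      rw [← e1] at g1
      have g2 := lineval' (q 0) e hee (a : ℝ) s β t3
      rw [← e2] at g2
      have g3 := lineval' (q 0) e hee (a : ℝ) s β t4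
      rw [← e3] at g3
      have hmono : StrictMono fun i => (a : ℝ) * dist (q i) (q 0 + s • e) + ⟪q i, β • e⟫ := by
        apply sm_fin4
        · rw [g0, g1]; linarith
        · rw [g1, g2]; linarith
        · rw [g2, g3]; linarith
      exact ⟨a, q 0 + s • e, β • e,
        cond_of_strictMono (by norm_num) q a _ _ hmono, hmono⟩
    · -- planar, independent case
      have hind : ∀ s t : ℝ, s • (q 1 - q 0) + t • (q 2 - q 1) = 0 → s = 0 ∧ t = 0 := by
        intro s t h
        have ht : t = 0 := by
          by_contra ht0
          apply hdep
          refine ⟨-s / t, ?_⟩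
          have h2 : t • (q 2 - q 1) = (-s) • (q 1 - q 0) := by
            linear_combination (norm := module) h
          calc q 2 - q 1 = t⁻¹ • (t • (q 2 - q 1)) := by
                rw [smul_smul, inv_mul_cancel₀ ht0, one_smul]
          _ = t⁻¹ • ((-s) • (q 1 - q 0)) := by rw [h2]
          _ = (-s / t) • (q 1 - q 0) := by rw [smul_smul, div_eq_inv_mul]
        subst ht
        rw [zero_smul, add_zero] at h
        refine ⟨?_, rfl⟩
        rcases smul_eq_zero.1 h with h' | h'
        · exact h'
        · exact absurd h' hd1
      have hd3 : q 3 - q 2 = (X - 1) • (q 1 - q 0) + (Y - 1) • (q 2 - q 1) := by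
        linear_combination (norm := module) hXY
      obtain ⟨A, hA⟩ : ∃ x : ℝ, x = X - 1 := ⟨_, rfl⟩
      obtain ⟨B, hB⟩ : ∃ x : ℝ, x = Y - 1 := ⟨_, rfl⟩
      rw [← hA, ← hB] at hd3
      by_cases hAB : 0 < A ∨ 0 < B
      · -- a positive linear functional exists
        obtain ⟨W1, W2, hW1, hW2, hW3⟩ : ∃ W1 W2 : ℝ, 0 < W1 ∧ 0 < W2 ∧ 0 < A * W1 + B * W2 := by
          rcases hAB with hA0 | hB0
          · refine ⟨(1 + |B|) / A, 1, by positivity, one_pos, ?_⟩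
            have hh : A * ((1 + |B|) / A) = 1 + |B| := by field_simp
            nlinarith [neg_abs_le B]
          · refine ⟨1, (1 + |A|) / B, one_pos, by positivity, ?_⟩
            have hh : B * ((1 + |A|) / B) = 1 + |A| := by field_simp
            nlinarith [neg_abs_le A]
        obtain ⟨w, hwd1, hwd2⟩ := dual_basis hind W1 W2
        have hi1 : ⟪q 1, w⟫ - ⟪q 0, w⟫ = W1 := by rw [← inner_sub_left, hwd1]
        have hi2 : ⟪q 2, w⟫ - ⟪q 1, w⟫ = W2 := by rw [← inner_sub_left, hwd2]
        have hi3 : ⟪q 3, w⟫ - ⟪q 2, w⟫ = A * W1 + B * W2 := by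
          rw [← inner_sub_left, hd3, inner_add_left, real_inner_smul_left,
            real_inner_smul_left, hwd1, hwd2]
        have hmono : StrictMono fun i => ((0 : ℕ) : ℝ) * dist (q i) 0 + ⟪q i, w⟫ := by
          apply sm_fin4 <;> push_cast <;> simp only [zero_mul, zero_add] <;> linarith
        exact ⟨0, 0, w, cond_of_strictMono (by norm_num) q 0 _ _ hmono, hmono⟩
      · -- the hard planar case
        push_neg at hAB
        obtain ⟨hA0, hB0⟩ := hAB
        obtain ⟨α, hα⟩ : ∃ x : ℝ, x = -A := ⟨_, rfl⟩
        obtain ⟨βc, hβc⟩ : ∃ x : ℝ, x = -B := ⟨_, rfl⟩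
        have hα0 : 0 ≤ α := by rw [hα]; linarith
        have hβ0 : 0 ≤ βc := by rw [hβc]; linarith
        have hd3' : q 3 - q 2 = (-α) • (q 1 - q 0) + (-βc) • (q 2 - q 1) := by
          rw [show -α = A by rw [hα]; ring, show -βc = B by rw [hβc]; ring]
          exact hd3
        have hout : 1 < βc ∨ βc < α := by
          by_contra hcon
          push_neg at hcon
          obtain ⟨hβ1, hαβ⟩ := hcon
          apply hhull
          have hq3 : q 3 = α • q 0 + ((βc - α) • q 1 + (1 - βc) • q 2) := by
            linear_combination (norm := module) hd3'
          have hcm : (Finset.univ : Finset (Fin 3)).centerMass ![α, βc - α, 1 - βc] ![q 0, q 1, q 2]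
              = α • q 0 + ((βc - α) • q 1 + (1 - βc) • q 2) := by
            rw [Finset.centerMass_eq_of_sum_1]
            · simp [Fin.sum_univ_three]
              abel
            · simp [Fin.sum_univ_three]
          have hmem := Finset.centerMass_mem_convexHull (Finset.univ : Finset (Fin 3))
            (w := ![α, βc - α, 1 - βc])
            (by intro i _; fin_cases i <;> simp <;> linarith)
            (by simp [Fin.sum_univ_three])
            (z := ![q 0, q 1, q 2]) (s := ({q 0, q 1, q 2} : Set F))
            (by intro i _; fin_cases i <;> simp)
          rw [hq3, ← hcm]
          exact hmem
        rcases hout with hβ1 | hαβ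
        · -- branch II : vantage point q 1
          have hD01 : dist (q 0) (q 1) = ‖q 1 - q 0‖ := by rw [dist_eq_norm, norm_sub_rev]
          have hD21 : dist (q 2) (q 1) = ‖q 2 - q 1‖ := dist_eq_norm _ _
          have hq31 : q 3 - q 1 = -(α • (q 1 - q 0) + (βc - 1) • (q 2 - q 1)) := by
            linear_combination (norm := module) hd3'
          have hD31 : dist (q 3) (q 1) = ‖α • (q 1 - q 0) + (βc - 1) • (q 2 - q 1)‖ := by
            rw [dist_eq_norm, hq31, norm_neg]
          have hxn : ‖α • (q 1 - q 0)‖ = α * ‖q 1 - q 0‖ := by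
            rw [norm_smul, Real.norm_eq_abs, abs_of_nonneg hα0]
          have hyn : ‖(βc - 1) • (q 2 - q 1)‖ = (βc - 1) * ‖q 2 - q 1‖ := by
            rw [norm_smul, Real.norm_eq_abs, abs_of_nonneg (by linarith)]
          have hyne : (βc - 1) • (q 2 - q 1) ≠ 0 :=
            smul_ne_zero (by intro h; linarith [h]) hd2
          have hψ : 0 < ‖α • (q 1 - q 0) + (βc - 1) • (q 2 - q 1)‖
              + ‖(βc - 1) • (q 2 - q 1)‖ - ‖α • (q 1 - q 0)‖ := by
            rcases eq_or_lt_of_le hα0 with hface | hα0'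
            · rw [← hface, zero_smul, zero_add, norm_zero]
              have := norm_pos_iff.2 hyne
              linarith
            · have hind2 : ∀ s t : ℝ, s • (α • (q 1 - q 0)) + t • ((βc - 1) • (q 2 - q 1)) = 0
                  → s = 0 ∧ t = 0 := by
                intro s t h
                have h' := hind (s * α) (t * (βc - 1)) (by
                  rw [mul_smul, mul_smul]; exact h)
                constructor
                · rcases mul_eq_zero.1 h'.1 with h'' | h''
                  · exact h''
                  · exact absurd h'' (ne_of_gt hα0')
                · rcases mul_eq_zero.1 h'.2 with h'' | h''
                  · exact h''
                  · exfalso; linarith [h'']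
              have := norm3 hyne hind2
              linarith
          obtain ⟨t0, W1, W2, ht0, hW1, hW2, hW3⟩ := hard_w α βc
            (dist (q 1) (q 1) - dist (q 0) (q 1)) (dist (q 2) (q 1) - dist (q 1) (q 1))
            (dist (q 3) (q 1) - dist (q 2) (q 1)) (by linarith)
            (by rw [dist_self, hD01, hD21, hD31]; nlinarith [hψ, hxn, hyn])
          obtain ⟨w, hwd1, hwd2⟩ := dual_basis hind W1 W2
          have hi1 : ⟪q 1, w⟫ - ⟪q 0, w⟫ = W1 := by rw [← inner_sub_left, hwd1]
          have hi2 : ⟪q 2, w⟫ - ⟪q 1, w⟫ = W2 := by rw [← inner_sub_left, hwd2]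
          have hi3 : ⟪q 3, w⟫ - ⟪q 2, w⟫ = -α * W1 - βc * W2 := by
            rw [← inner_sub_left, hd3', inner_add_left, real_inner_smul_left,
              real_inner_smul_left, hwd1, hwd2]
            ring
          have hmono : StrictMono fun i => ((1 : ℕ) : ℝ) * dist (q i) (q 1) + ⟪q i, w⟫ := by
            apply sm_fin4 <;> push_cast <;> linarith
          exact ⟨1, q 1, w, Or.inl le_rfl, hmono⟩
        · -- branch I : vantage point q 2
          have hα0' : 0 < α := lt_of_le_of_lt hβ0 hαβ
          have hD02 : dist (q 0) (q 2) = ‖(q 1 - q 0) + (q 2 - q 1)‖ := by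
            rw [dist_eq_norm, norm_sub_rev, show q 2 - q 0 = (q 1 - q 0) + (q 2 - q 1) by abel]
          have hD12 : dist (q 1) (q 2) = ‖q 2 - q 1‖ := by rw [dist_eq_norm, norm_sub_rev]
          have hq32 : q 3 - q 2
              = -(α • ((q 1 - q 0) + (q 2 - q 1)) + -((α - βc) • (q 2 - q 1))) := by
            linear_combination (norm := module) hd3'
          have hD32 : dist (q 3) (q 2)
              = ‖α • ((q 1 - q 0) + (q 2 - q 1)) + -((α - βc) • (q 2 - q 1))‖ := by
            rw [dist_eq_norm, hq32, norm_neg]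
          have hxn : ‖α • ((q 1 - q 0) + (q 2 - q 1))‖ = α * ‖(q 1 - q 0) + (q 2 - q 1)‖ := by
            rw [norm_smul, Real.norm_eq_abs, abs_of_nonneg hα0]
          have hyn : ‖-((α - βc) • (q 2 - q 1))‖ = (α - βc) * ‖q 2 - q 1‖ := by
            rw [norm_neg, norm_smul, Real.norm_eq_abs, abs_of_nonneg (by linarith)]
          have hyne : -((α - βc) • (q 2 - q 1)) ≠ 0 :=
            neg_ne_zero.2 (smul_ne_zero (by intro h; rw [sub_eq_zero] at h; rw [h] at hαβ; exact lt_irrefl _ hαβ) hd2)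
          have hind2 : ∀ s t : ℝ, s • (α • ((q 1 - q 0) + (q 2 - q 1)))
              + t • (-((α - βc) • (q 2 - q 1))) = 0 → s = 0 ∧ t = 0 := by
            intro s t h
            have h' := hind (s * α) (s * α - t * (α - βc)) (by
              linear_combination (norm := module) h)
            have hs0 : s = 0 := by
              rcases mul_eq_zero.1 h'.1 with h'' | h''
              · exact h''
              · exact absurd h'' (ne_of_gt hα0')
            refine ⟨hs0, ?_⟩
            have h2 := h'.2
            rw [hs0, zero_mul, zero_sub, neg_eq_zero] at h2
            rcases mul_eq_zero.1 h2 with h'' | h''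
            · exact h''
            · exfalso; rw [sub_eq_zero] at h''; rw [h''] at hαβ; exact lt_irrefl _ hαβ
          have hψ : 0 < ‖α • ((q 1 - q 0) + (q 2 - q 1)) + -((α - βc) • (q 2 - q 1))‖
              + ‖-((α - βc) • (q 2 - q 1))‖ - ‖α • ((q 1 - q 0) + (q 2 - q 1))‖ := by
            have := norm3 hyne hind2
            linarith
          obtain ⟨t0, W1, W2, ht0, hW1, hW2, hW3⟩ := hard_w α βc
            (dist (q 1) (q 2) - dist (q 0) (q 2)) (dist (q 2) (q 2) - dist (q 1) (q 2))
            (dist (q 3) (q 2) - dist (q 2) (q 2)) (by linarith)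
            (by rw [dist_self, hD02, hD12, hD32]; nlinarith [hψ, hxn, hyn])
          obtain ⟨w, hwd1, hwd2⟩ := dual_basis hind W1 W2
          have hi1 : ⟪q 1, w⟫ - ⟪q 0, w⟫ = W1 := by rw [← inner_sub_left, hwd1]
          have hi2 : ⟪q 2, w⟫ - ⟪q 1, w⟫ = W2 := by rw [← inner_sub_left, hwd2]
          have hi3 : ⟪q 3, w⟫ - ⟪q 2, w⟫ = -α * W1 - βc * W2 := by
            rw [← inner_sub_left, hd3', inner_add_left, real_inner_smul_left,
              real_inner_smul_left, hwd1, hwd2]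
            ring
          have hmono : StrictMono fun i => ((1 : ℕ) : ℝ) * dist (q i) (q 2) + ⟪q i, w⟫ := by
            apply sm_fin4 <;> push_cast <;> linarith
          exact ⟨1, q 2, w, Or.inl le_rfl, hmono⟩
  · -- q 3 outside the affine hull: perpendicular boost
    obtain ⟨w0, hw01, hw02, hw0z, hw0ne⟩ := perp_of_not_span hd1 hplane
    obtain ⟨a, v, w, g1, g2, _⟩ := triple (q 0) (q 1) (q 2) h10 hseg
    obtain ⟨S, hS⟩ : ∃ x : ℝ, x = ((a : ℝ) * dist (q 3) v + ⟪q 3, w⟫)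
        - ((a : ℝ) * dist (q 2) v + ⟪q 2, w⟫) := ⟨_, rfl⟩
    have hP : (0:ℝ) < ‖w0‖ ^ 2 := pow_pos (norm_pos_iff.2 hw0ne) 2
    obtain ⟨A, hA⟩ : ∃ x : ℝ, x = (|S| + 1) / ‖w0‖ ^ 2 := ⟨_, rfl⟩
    have hi01 : ⟪q 1, A • w0⟫ - ⟪q 0, A • w0⟫ = 0 := by
      rw [← inner_sub_left, real_inner_smul_right, hw01, mul_zero]
    have hi12 : ⟪q 2, A • w0⟫ - ⟪q 1, A • w0⟫ = 0 := by
      rw [← inner_sub_left, real_inner_smul_right, hw02, mul_zero]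
    have hi23 : ⟪q 3, A • w0⟫ - ⟪q 2, A • w0⟫ = A * ‖w0‖ ^ 2 := by
      rw [← inner_sub_left, real_inner_smul_right]
      have h32 : q 3 - q 2 = (q 3 - q 0) - (q 1 - q 0) - (q 2 - q 1) := by abel
      rw [h32, inner_sub_left, inner_sub_left, hw0z, hw01, hw02]
      ring
    have hA23 : A * ‖w0‖ ^ 2 = |S| + 1 := by
      rw [hA]; field_simp
    have E : ∀ i : Fin 4, (a : ℝ) * dist (q i) v + ⟪q i, w + A • w0⟫
        = ((a : ℝ) * dist (q i) v + ⟪q i, w⟫) + ⟪q i, A • w0⟫ := by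
      intro i; rw [inner_add_right]; ring
    have hmono : StrictMono fun i => (a : ℝ) * dist (q i) v + ⟪q i, w + A • w0⟫ := by
      apply sm_fin4
      · rw [E, E]; linarith
      · rw [E, E]; linarith
      · rw [E, E]
        linarith [neg_le_abs S]
    exact ⟨a, v, w + A • w0, cond_of_strictMono (by norm_num) q a v _ hmono, hmono⟩

end GeneralAux

variable {d : ℕ}

lemma sumDist_add (V W : Multiset (EuclideanSpace ℝ (Fin d))) (x : EuclideanSpace ℝ (Fin d)) :
    sumDist (V + W) x = sumDist V x + sumDist W x := by
  simp [sumDist]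

lemma sumDist_replicate (k : ℕ) (v x : EuclideanSpace ℝ (Fin d)) :
    sumDist (Multiset.replicate k v) x = k * dist x v := by
  simp [sumDist, Multiset.map_replicate, Multiset.sum_replicate, nsmul_eq_mul]

lemma realize {n : ℕ} {C : Finset (EuclideanSpace ℝ (Fin d))}
    (σ : Fin n → EuclideanSpace ℝ (Fin d)) (hn : n = C.card)
    (hinj : Function.Injective σ) (hmem : ∀ i, σ i ∈ C)
    (a : ℕ) (v w : EuclideanSpace ℝ (Fin d)) (hcond : 1 ≤ a ∨ w ≠ 0)
    (hmono : StrictMono fun i => (a : ℝ) * dist (σ i) v + ⟪σ i, w⟫) :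
    σ ∈ PsiAll n C := by
  have hsurj : ∀ c ∈ C, ∃ i, σ i = c := by
    intro c hc
    have he : Function.Injective (fun i : Fin n => (⟨σ i, hmem i⟩ : {x // x ∈ C})) :=
      fun i j h => hinj (congrArg Subtype.val h)
    have hbij : Function.Bijective (fun i : Fin n => (⟨σ i, hmem i⟩ : {x // x ∈ C})) :=
      (Fintype.bijective_iff_injective_and_card _).2 ⟨he, by simp [Fintype.card_coe, hn]⟩
    obtain ⟨i, hi⟩ := hbij.2 ⟨c, hc⟩
    exact ⟨i, congrArg Subtype.val hi⟩
  have key : ∀ V : Multiset (EuclideanSpace ℝ (Fin d)),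
      (StrictMono fun i => sumDist V (σ i)) → Set.InjOn (sumDist V) ↑C := by
    intro V hV x hx y hy hxy
    obtain ⟨i, rfl⟩ := hsurj x hx
    obtain ⟨j, rfl⟩ := hsurj y hy
    exact congrArg σ (hV.injective hxy)
  by_cases hw : w = 0
  · have ha : 1 ≤ a := hcond.resolve_right (fun h => h hw)
    have hmono' : StrictMono fun i => sumDist (Multiset.replicate a v) (σ i) := by
      have : (fun i => sumDist (Multiset.replicate a v) (σ i)) =
          fun i => (a : ℝ) * dist (σ i) v + ⟪σ i, w⟫ := by
        funext i; rw [sumDist_replicate, hw, inner_zero_right, add_zero]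
      rw [this]; exact hmono
    exact ⟨hinj, hmem, Multiset.replicate a v, by simpa using ha, key _ hmono', hmono'⟩
  · -- w ≠ 0
    set c : ℝ := ‖w‖ with hc
    have hc0 : 0 < c := norm_pos_iff.2 hw
    set u : EuclideanSpace ℝ (Fin d) := -(c⁻¹ • w) with hudef
    have hu : ‖u‖ = 1 := by
      rw [hudef, norm_neg, norm_smul, Real.norm_eq_abs, abs_inv, abs_of_pos hc0]
      field_simp
      exact hc.symm
    have hxu : ∀ x : EuclideanSpace ℝ (Fin d), c * -⟪x, u⟫ = ⟪x, w⟫ := by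
      intro x
      rw [hudef, inner_neg_right, real_inner_smul_right]
      field_simp
    -- Step A: replace the linear functional by a far vantage point
    have htend : ∀ i, Tendsto
        (fun R : ℝ => (a : ℝ) * dist (σ i) v + c * (dist (σ i) (R • u) - R)) atTop
        (𝓝 ((a : ℝ) * dist (σ i) v + ⟪σ i, w⟫)) := by
      intro i
      have := ((tendsto_dist_far (σ i) u hu).const_mul c).const_add ((a : ℝ) * dist (σ i) v)
      rwa [hxu] at this
    obtain ⟨R, hR⟩ := (eventually_strictMono htend hmono).exists
    have hmono2 : StrictMono fun i => (a : ℝ) * dist (σ i) v + c * dist (σ i) (R • u) := by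
      have h2 := hR.add_const (c * R)
      have : (fun i => ((a : ℝ) * dist (σ i) v + c * (dist (σ i) (R • u) - R)) + c * R) =
          fun i => (a : ℝ) * dist (σ i) v + c * dist (σ i) (R • u) := by
        funext i; ring
      rwa [this] at h2
    -- Step B: rationalize the coefficient c
    have hqt : Tendsto (fun k : ℕ => ((⌈(k : ℝ) * c⌉₊ : ℝ) / (k : ℝ))) atTop (𝓝 c) := by
      apply tendsto_of_tendsto_of_tendsto_of_le_of_le'
        (g := fun _ : ℕ => c) (h := fun k : ℕ => c + 1 / (k : ℝ))
      · exact tendsto_const_nhds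
      · simpa using (tendsto_const_nhds (x := c)).add (tendsto_one_div_atTop_nhds_zero_nat (𝕜 := ℝ))
      · filter_upwards [eventually_ge_atTop 1] with k hk
        have hk0 : (0 : ℝ) < (k : ℝ) := by exact_mod_cast hk
        rw [le_div_iff₀ hk0, mul_comm]
        exact Nat.le_ceil _
      · filter_upwards [eventually_ge_atTop 1] with k hk
        have hk0 : (0 : ℝ) < (k : ℝ) := by exact_mod_cast hk
        have h1 : ((⌈(k : ℝ) * c⌉₊ : ℝ)) ≤ (k : ℝ) * c + 1 := by
          have := Nat.ceil_lt_add_one (by positivity : (0:ℝ) ≤ (k : ℝ) * c)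
          linarith
        rw [div_le_iff₀ hk0]
        calc ((⌈(k : ℝ) * c⌉₊ : ℝ)) ≤ (k : ℝ) * c + 1 := h1
        _ = (c + 1 / (k:ℝ)) * (k:ℝ) := by field_simp
    have htend2 : ∀ i, Tendsto
        (fun k : ℕ => (a : ℝ) * dist (σ i) v + ((⌈(k : ℝ) * c⌉₊ : ℝ) / (k : ℝ)) * dist (σ i) (R • u))
        atTop (𝓝 ((a : ℝ) * dist (σ i) v + c * dist (σ i) (R • u))) :=
      fun i => tendsto_const_nhds.add (hqt.mul_const _)
    obtain ⟨k, hk, hk1⟩ :=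
      ((eventually_strictMono htend2 hmono2).and (eventually_ge_atTop 1)).exists
    have hk0 : (0 : ℝ) < (k : ℝ) := by exact_mod_cast hk1
    set m : ℕ := ⌈(k : ℝ) * c⌉₊ with hm
    have hm1 : 1 ≤ m := Nat.one_le_iff_ne_zero.2 (by
      have : (0:ℝ) < (k : ℝ) * c := by positivity
      simpa [hm, Nat.ceil_eq_zero, not_le] using Nat.ceil_pos.2 this |>.ne')
    set V : Multiset (EuclideanSpace ℝ (Fin d)) :=
      Multiset.replicate (k * a) v + Multiset.replicate m (R • u) with hV
    have hVval : ∀ x, sumDist V x = (k : ℝ) * ((a : ℝ) * dist x v + ((m : ℝ) / (k : ℝ)) * dist x (R • u)) := by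
      intro x
      rw [hV, sumDist_add, sumDist_replicate, sumDist_replicate]
      push_cast
      field_simp
    have hmonoV : StrictMono fun i => sumDist V (σ i) := by
      have : (fun i => sumDist V (σ i)) =
          fun i => (k : ℝ) * ((a : ℝ) * dist (σ i) v + ((m : ℝ) / (k : ℝ)) * dist (σ i) (R • u)) := by
        funext i; exact hVval _
      rw [this]
      exact hk.const_mul hk0
    refine ⟨hinj, hmem, V, ?_, key _ hmonoV, hmonoV⟩
    rw [hV]
    simp only [Multiset.card_add, Multiset.card_replicate]
    omega

section Wrapper

variable {F : Type*} [NormedAddCommGroup F] [InnerProductSpace ℝ F]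

lemma construct2 (q : Fin 2 → F) (hinj : Function.Injective q) :
    ∃ (a : ℕ) (v w : F), (1 ≤ a ∨ w ≠ 0) ∧
      StrictMono fun i => (a : ℝ) * dist (q i) v + ⟪q i, w⟫ := by
  refine ⟨1, q 0, 0, Or.inl le_rfl, sm_fin2 ?_⟩
  push_cast
  simp only [inner_zero_right, add_zero, one_mul, dist_self]
  exact dist_pos.2 (hinj.ne (by decide))

lemma construct3 (q : Fin 3 → F) (hinj : Function.Injective q)
    (hseg : q 2 ∉ segment ℝ (q 0) (q 1)) :
    ∃ (a : ℕ) (v w : F), (1 ≤ a ∨ w ≠ 0) ∧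
      StrictMono fun i => (a : ℝ) * dist (q i) v + ⟪q i, w⟫ := by
  obtain ⟨a, v, w, g1, g2, hc⟩ := triple (q 0) (q 1) (q 2) (hinj.ne (by decide)) hseg
  exact ⟨a, v, w, hc, sm_fin3 g1 g2⟩

end Wrapper

variable {d : ℕ}

lemma construct {n : ℕ} (hn : n ≤ 4) (q : Fin n → EuclideanSpace ℝ (Fin d))
    (hinj : Function.Injective q) (hpro : Protrusive q) :
    ∃ (a : ℕ) (v w : EuclideanSpace ℝ (Fin d)), (1 ≤ a ∨ w ≠ 0) ∧
      StrictMono fun i => (a : ℝ) * dist (q i) v + ⟪q i, w⟫ := by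
  interval_cases n
  · exact ⟨1, 0, 0, Or.inl le_rfl, fun i => i.elim0⟩
  · refine ⟨1, 0, 0, Or.inl le_rfl, fun i j hij => ?_⟩
    rw [Subsingleton.elim i j] at hij
    exact absurd hij (lt_irrefl _)
  · exact construct2 q hinj
  · -- n = 3
    have hset : {j : Fin 3 | (j : ℕ) ≤ 1} = {0, 1} := by
      ext j
      simp only [Set.mem_setOf_eq, Set.mem_insert_iff, Set.mem_singleton_iff]
      fin_cases j <;> decide
    have hseg : q 2 ∉ segment ℝ (q 0) (q 1) := by
      have h := hpro 1 (by norm_num)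
      rw [show (⟨1 + 1, by norm_num⟩ : Fin 3) = 2 from rfl, hset, Set.image_insert_eq,
        Set.image_singleton, convexHull_pair] at h
      exact h
    exact construct3 q hinj hseg
  · -- n = 4
    have hset1 : {j : Fin 4 | (j : ℕ) ≤ 1} = {0, 1} := by
      ext j
      simp only [Set.mem_setOf_eq, Set.mem_insert_iff, Set.mem_singleton_iff]
      fin_cases j <;> decide
    have hset2 : {j : Fin 4 | (j : ℕ) ≤ 2} = {0, 1, 2} := by
      ext j
      simp only [Set.mem_setOf_eq, Set.mem_insert_iff, Set.mem_singleton_iff]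
      fin_cases j <;> decide
    have hseg : q 2 ∉ segment ℝ (q 0) (q 1) := by
      have h := hpro 1 (by norm_num)
      rw [show (⟨1 + 1, by norm_num⟩ : Fin 4) = 2 from rfl, hset1, Set.image_insert_eq,
        Set.image_singleton, convexHull_pair] at h
      exact h
    have hhull : q 3 ∉ convexHull ℝ ({q 0, q 1, q 2} : Set (EuclideanSpace ℝ (Fin d))) := by
      have h := hpro 2 (by norm_num)
      rw [show (⟨2 + 1, by norm_num⟩ : Fin 4) = 3 from rfl, hset2, Set.image_insert_eq,
        Set.image_insert_eq, Set.image_singleton] at h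
      exact h
    exact construct4 q hinj hseg hhull

lemma convexOn_sumDist (V : Multiset (EuclideanSpace ℝ (Fin d))) :
    ConvexOn ℝ Set.univ (sumDist V) := by
  induction V using Multiset.induction_on with
  | empty =>
    have h : sumDist (0 : Multiset (EuclideanSpace ℝ (Fin d))) = fun _ => (0 : ℝ) := by
      funext x; simp [sumDist]
    rw [h]
    exact convexOn_const 0 convex_univ
  | cons v V ih =>
    have h : sumDist (v ::ₘ V) = fun x => dist x v + sumDist V x := by
      funext x; simp [sumDist]
    rw [h]
    exact (convexOn_dist v convex_univ).add ih

/-- If `C ⊆ ℝ^d` (`d ≥ 1` arbitrary) is a set of `n ≤ 4` distinct points, then `Ψ(C)`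
is exactly the set of protrusive orderings of `C`. -/
theorem psiAll_eq_protrusive_of_card_le_four (d : ℕ) (hd : 1 ≤ d)
    (C : Finset (EuclideanSpace ℝ (Fin d))) (hC : C.card ≤ 4) :
    PsiAll C.card C =
      {σ : Fin C.card → EuclideanSpace ℝ (Fin d) |
        Function.Injective σ ∧ (∀ i, σ i ∈ C) ∧ Protrusive σ} := by
  ext σ
  simp only [PsiAll, Set.mem_setOf_eq]
  constructor
  · rintro ⟨hinj, hmem, V, hV1, hVinj, hmono⟩
    refine ⟨hinj, hmem, ?_⟩
    intro i h hcon
    have hcv : ConvexOn ℝ (convexHull ℝ (σ '' {j : Fin C.card | (j : ℕ) ≤ i})) (sumDist V) :=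
      (convexOn_sumDist V).subset (Set.subset_univ _) (convex_convexHull ℝ _)
    obtain ⟨y, hy, hle⟩ := hcv.exists_ge_of_mem_convexHull (subset_convexHull ℝ _) hcon
    obtain ⟨j, hji, rfl⟩ := hy
    have hlt : j < (⟨i + 1, h⟩ : Fin C.card) := by
      rw [Fin.lt_def]
      exact Nat.lt_succ_of_le hji
    exact absurd hle (not_le.2 (hmono hlt))
  · rintro ⟨hinj, hmem, hpro⟩
    obtain ⟨a, v, w, hcond, hmono⟩ := construct hC σ hinj hpro
    exact realize σ rfl hinj hmem a v w hcond hmono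
end
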